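/- Let K be a field, a = (a_0,...,a_d) a strictly increasing sequence of natural numbers with a_0 = 0, n > 1, and P = (x_1,...,x_{n-1}) in R = K[x_1,...,x_n]. Then L(P,a) = Σ_{i=0}^d P^{d-i}x_n^{a_i} is integrally closed in R if and only if L((x_1),a) = Σ_{i=0}^d (x_1)^{d-i}x_2^{a_i} is integrally closed in K[x_1,x_2]. -/

import Mathlib

/-!
Both ideals are monomial: `x^e ∈ L(P,a)` iff `s = e_1 + ⋯ + e_{n-1}` and `t = e_n` satisfy
`d - i ≤ s` and `a_i ≤ t` for some `i ≤ d`. The maps `x ↦ x_1, y ↦ x_n` and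
`x_i ↦ x (i < n), x_n ↦ y` exhibit `K[x, y]` as a retract of `R` compatible with the two ideals,
so integral closedness descends from `L(P,a)` to `L((x_1),a)`.

Conversely, if `L((x_1),a)` is integrally closed, then every lattice point `(j, t)` on or above a
chord of the graph of `a` gives a monomial `x^{d-j} y^t` of it, because a power of that monomial
lies in the same power of the ideal. For a monomial `x^e` outside `L(P,a)`, this chord condition
yields weights `λ` on `x_1, …, x_{n-1}` and `μ` on `x_n` making `x^e` strictly lighter than every
generator of `L(P,a)`. Since the least weight of a monomial is a valuation, the polynomials all of
whose monomials are heavier than `x^e` form an integrally closed ideal containing `L(P,a)`, so `x^e`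
occurs in no element of the integral closure of `L(P,a)`.
-/

open MvPolynomial

noncomputable section

/-- The prime ideal `P = (x_1,…,x_{n-1})` in `R = K[x_1,…,x_n]` with `n = m+1`. -/
def Pid (K : Type) [Field K] (m : ℕ) : Ideal (MvPolynomial (Fin (m + 1)) K) :=
  Ideal.span {f | ∃ i : Fin (m + 1), i ≠ Fin.last m ∧ f = X i}

/-- `L(P,a) = Σ_{i=0}^d P^{d-i}·x_n^{a_i}` for a sequence `a`. -/
def Lideal (K : Type) [Field K] (m : ℕ) (d : ℕ) (a : ℕ → ℕ) :
    Ideal (MvPolynomial (Fin (m + 1)) K) :=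
  ∑ i ∈ Finset.range (d + 1), Pid K m ^ (d - i) * Ideal.span {X (Fin.last m) ^ a i}

/-- The integral closure of an ideal, as a set: elements satisfying an equation
`a^t + r_1 a^{t-1} + … + r_t = 0` with `r_i ∈ I^i`. -/
def intClo {A : Type} [CommRing A] (I : Ideal A) : Set A :=
  {a | ∃ (t : ℕ) (r : ℕ → A), 0 < t ∧ (∀ i, 1 ≤ i → i ≤ t → r i ∈ I ^ i) ∧
    a ^ t + ∑ i ∈ Finset.Icc 1 t, r i * a ^ (t - i) = 0}

/-- `I` is integrally closed. -/
def IsIC {A : Type} [CommRing A] (I : Ideal A) : Prop :=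
  ∀ a ∈ intClo I, a ∈ I

/-- Product of a sequence of length `dl+1` with one of length `el+1`:
`(ab)_j = min { a_r + b_s : r + s = j }`. -/
def seqMul (dl el : ℕ) (a b : ℕ → ℕ) : ℕ → ℕ := fun j =>
  sInf {v | ∃ r s : ℕ, r + s = j ∧ r ≤ dl ∧ s ≤ el ∧ v = a r + b s}

/-- `seqPow dl a k` is the `(k+1)`-fold product `a^{(k+1)}` of the sequence `a`
(of length `dl+1`) with itself. -/
def seqPow (dl : ℕ) (a : ℕ → ℕ) : ℕ → (ℕ → ℕ)
  | 0 => a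
  | k + 1 => seqMul dl ((k + 1) * dl) a (seqPow dl a k)

/-- `a'_j = min { ⌈(a^{(k)})_{kj}/k⌉ : k > 0 }` (here `k+1` runs over positive integers,
and `⌈x/(k+1)⌉ = (x + k)/(k+1)` in natural division). -/
def seqIC (dl : ℕ) (a : ℕ → ℕ) : ℕ → ℕ := fun j =>
  sInf {v | ∃ k : ℕ, v = (seqPow dl a k ((k + 1) * j) + k) / (k + 1)}

section IntegralClosure

variable {A B : Type} [CommRing A] [CommRing B]

theorem intClo_map {F : Type} [FunLike F A B] [RingHomClass F A B] (φ : F) {I : Ideal A}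
    {J : Ideal B} (h : I.map φ ≤ J) {f : A} (hf : f ∈ intClo I) : φ f ∈ intClo J := by
  obtain ⟨t, r, ht, hr, heq⟩ := hf
  refine ⟨t, fun i => φ (r i), ht, fun i h₁ h₂ => ?_, by simpa using congrArg φ heq⟩
  exact Ideal.pow_right_mono h i (Ideal.map_pow φ I i ▸ Ideal.mem_map_of_mem φ (hr i h₁ h₂))

theorem mem_intClo_of_pow_mem_pow {I : Ideal A} {f : A} {k : ℕ} (hk : 0 < k)
    (hf : f ^ k ∈ I ^ k) : f ∈ intClo I := by
  classical
  refine ⟨k, fun i => if i = k then -f ^ k else 0, hk, fun i _ _ => ?_, ?_⟩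
  · dsimp only
    split_ifs with h
    · exact h.symm ▸ neg_mem hf
    · exact zero_mem _
  · rw [Finset.sum_eq_single_of_mem k (Finset.mem_Icc.mpr ⟨hk, le_rfl⟩)
      fun i _ hi => by simp [hi]]
    simp

theorem IsIC.of_retract {F G : Type} [FunLike F A B] [RingHomClass F A B] [FunLike G B A]
    [RingHomClass G B A] (ρ : F) (π : G) (hπρ : ∀ f, π (ρ f) = f) {I : Ideal A} {J : Ideal B}
    (hρ : I.map ρ ≤ J) (hπ : J.map π ≤ I) (hJ : IsIC J) : IsIC I :=
  fun f hf => hπρ f ▸ hπ (Ideal.mem_map_of_mem π (hJ _ (intClo_map ρ hρ hf)))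

end IntegralClosure

section WeightIdeal

variable {σ R : Type} [CommRing R] (w : σ → ℕ)

theorem Finsupp.weight_mono {e e' : σ →₀ ℕ} (h : e ≤ e') : weight w e ≤ weight w e' := by
  obtain ⟨e'', rfl⟩ := le_iff_exists_add.mp h
  simp

def weightIdeal (c : ℕ) : Ideal (MvPolynomial σ R) :=
  restrictSupportIdeal R {e | c ≤ Finsupp.weight w e}
    fun _ _ h he => he.trans (Finsupp.weight_mono w h)

variable {w}

theorem mem_weightIdeal {c : ℕ} {f : MvPolynomial σ R} :
    f ∈ weightIdeal w c ↔ ∀ e ∈ f.support, c ≤ Finsupp.weight w e :=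
  Iff.rfl

theorem weightIdeal_antitone : Antitone (weightIdeal (R := R) w) :=
  fun _ _ h _ hf => mem_weightIdeal.mpr fun e he => h.trans (mem_weightIdeal.mp hf e he)

theorem monomial_mem_weightIdeal {c : ℕ} {e : σ →₀ ℕ} (h : c ≤ Finsupp.weight w e) (r : R) :
    monomial e r ∈ weightIdeal w c := by
  classical
  refine mem_weightIdeal.mpr fun e' he' => ?_
  rwa [Finset.subset_singleton_iff'.mp support_monomial_subset e' he']

theorem weightIdeal_mul_le (c c' : ℕ) :
    weightIdeal (R := R) w c * weightIdeal w c' ≤ weightIdeal w (c + c') := by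
  classical
  refine Ideal.mul_le.mpr fun f hf g hg => mem_weightIdeal.mpr fun e he => ?_
  obtain ⟨e₁, he₁, e₂, he₂, rfl⟩ := Finset.mem_add.mp (support_mul f g he)
  simpa using Nat.add_le_add (mem_weightIdeal.mp hf e₁ he₁) (mem_weightIdeal.mp hg e₂ he₂)

theorem pow_le_weightIdeal {I : Ideal (MvPolynomial σ R)} {c : ℕ} (h : I ≤ weightIdeal w c)
    (k : ℕ) : I ^ k ≤ weightIdeal w (k * c) := by
  induction k with
  | zero => exact fun f _ => mem_weightIdeal.mpr fun _ _ => by simp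
  | succ k ih =>
    rw [pow_succ, Nat.succ_mul]
    exact (Ideal.mul_mono ih h).trans (weightIdeal_mul_le _ _)

variable (w)

-- The `Y`-adic order of the image of `f` is the least `w`-weight of a monomial of `f`.
def weightHomogenization : MvPolynomial σ R →ₐ[R] Polynomial (MvPolynomial σ R) :=
  aeval fun i => Polynomial.C (X i) * Polynomial.X ^ w i

theorem weightHomogenization_monomial (e : σ →₀ ℕ) (r : R) :
    weightHomogenization w (monomial e r) =
      Polynomial.C (monomial e r) * Polynomial.X ^ Finsupp.weight w e := by
  classical
  simp only [weightHomogenization, aeval_monomial, Finsupp.prod, mul_pow, ← pow_mul,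
    Finset.prod_mul_distrib, ← map_pow, ← map_prod, Finset.prod_pow_eq_pow_sum,
    prod_X_pow_eq_monomial]
  rw [Finsupp.weight_apply, Finsupp.sum, ← mul_assoc, Polynomial.algebraMap_apply,
    ← Polynomial.C_mul, algebraMap_eq, C_mul_monomial, mul_one]
  simp only [smul_eq_mul, mul_comm]

theorem coeff_weightHomogenization (f : MvPolynomial σ R) (n : ℕ) :
    (weightHomogenization w f).coeff n = weightedHomogeneousComponent w n f := by
  classical
  conv_lhs => rw [f.as_sum]
  simp only [map_sum, weightHomogenization_monomial, Polynomial.finsetSum_coeff,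
    Polynomial.coeff_C_mul_X_pow, weightedHomogeneousComponent_apply, Finset.sum_filter, eq_comm]

variable {w}

theorem mem_weightIdeal_iff_X_pow_dvd {c : ℕ} {f : MvPolynomial σ R} :
    f ∈ weightIdeal w c ↔ Polynomial.X ^ c ∣ weightHomogenization w f := by
  classical
  simp only [mem_weightIdeal, Polynomial.X_pow_dvd_iff, coeff_weightHomogenization,
    MvPolynomial.ext_iff, coeff_weightedHomogeneousComponent, coeff_zero, mem_support_iff]
  constructor
  · intro h n hn e
    split_ifs with he
    · by_contra hne
      exact absurd (h e hne) (by omega)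
    · rfl
  · intro h e he
    by_contra hlt
    simpa [he] using h _ (not_le.mp hlt) e

end WeightIdeal

theorem Polynomial.not_X_pow_mul_add_one_dvd_pow {R : Type} [CommRing R] [IsDomain R]
    {p : Polynomial R} {o : ℕ} (h : X ^ o ∣ p) (h' : ¬X ^ (o + 1) ∣ p) (t : ℕ) :
    ¬X ^ (t * o + 1) ∣ p ^ t := by
  obtain ⟨g, rfl⟩ := h
  have hg : ¬X ∣ g := fun ⟨q, hq⟩ => h' ⟨q, by rw [hq, pow_succ, mul_assoc]⟩
  rw [mul_pow, ← pow_mul, pow_succ, mul_comm o t]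
  exact fun hdvd => hg (prime_X.dvd_of_dvd_pow
    ((mul_dvd_mul_iff_left (pow_ne_zero _ X_ne_zero)).mp hdvd))

theorem mem_weightIdeal_of_mem_intClo {σ R : Type} [CommRing R] [IsDomain R] {w : σ → ℕ}
    {I : Ideal (MvPolynomial σ R)} {c : ℕ} (hI : I ≤ weightIdeal w c) {f : MvPolynomial σ R}
    (hf : f ∈ intClo I) : f ∈ weightIdeal w c := by
  obtain ⟨t, r, -, hr, heq⟩ := hf
  by_contra hfc
  set p := weightHomogenization w f
  have hp : p ≠ 0 := fun h =>
    hfc (mem_weightIdeal_iff_X_pow_dvd.mpr (show _ ∣ p from h ▸ dvd_zero _))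
  set o := p.natTrailingDegree
  have hfo : f ∈ weightIdeal w o := mem_weightIdeal_iff_X_pow_dvd.mpr
    (Polynomial.X_pow_dvd_iff.mpr fun _ => Polynomial.coeff_eq_zero_of_lt_natTrailingDegree)
  have hfo' : ¬Polynomial.X ^ (o + 1) ∣ p := fun h => hp
    (Polynomial.coeff_natTrailingDegree_eq_zero.mp (Polynomial.X_pow_dvd_iff.mp h o o.lt_succ_self))
  have hoc : o < c := lt_of_not_ge fun hco => hfc (weightIdeal_antitone hco hfo)
  -- Each term `r i * f ^ (t - i)` has weight `≥ i * c + (t - i) * o > t * o`, whereas `Y` is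
  -- prime, so the least weight of `f ^ t` is exactly `t * o`.
  have hsum : ∑ i ∈ Finset.Icc 1 t, r i * f ^ (t - i) ∈ weightIdeal w (t * o + 1) := by
    refine Ideal.sum_mem _ fun i hi => ?_
    obtain ⟨hi₁, hi₂⟩ := Finset.mem_Icc.mp hi
    have hri := pow_le_weightIdeal hI i (hr i hi₁ hi₂)
    have hfi := pow_le_weightIdeal le_rfl (t - i) (Ideal.pow_mem_pow hfo (t - i))
    refine weightIdeal_antitone ?_ (weightIdeal_mul_le _ _ (Ideal.mul_mem_mul hri hfi))
    have : i * o + (t - i) * o = t * o := by rw [← add_mul, Nat.add_sub_cancel' hi₂]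
    nlinarith
  have hft : f ^ t ∈ weightIdeal w (t * o + 1) := by
    rw [eq_neg_of_add_eq_zero_left heq]
    exact neg_mem hsum
  rw [mem_weightIdeal_iff_X_pow_dvd, map_pow] at hft
  exact Polynomial.not_X_pow_mul_add_one_dvd_pow (mem_weightIdeal_iff_X_pow_dvd.mp hfo) hfo' t hft

section Exponents

variable {d : ℕ} {a : ℕ → ℕ}

def IsLExponent (d : ℕ) (a : ℕ → ℕ) (s t : ℕ) : Prop := ∃ i ≤ d, d - i ≤ s ∧ a i ≤ t

-- `(j, t)` lies on or above the chord joining `(i₁, a i₁)` and `(i₂, a i₂)`.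
def ChordClosed (d : ℕ) (a : ℕ → ℕ) : Prop :=
  ∀ ⦃i₁ j i₂ t : ℕ⦄, i₁ < j → j < i₂ → i₂ ≤ d →
    (i₂ - j) * a i₁ + (j - i₁) * a i₂ ≤ (i₂ - i₁) * t → IsLExponent d a (d - j) t

theorem exists_separating_weight_of_chord_gt {j t : ℕ} (hj : 0 < j) (hjd : j ≤ d)
    (h0 : a 0 ≤ t) (ht : t < a j)
    (hchord : ∀ i₁ i₂, i₁ < j → j < i₂ → i₂ ≤ d →
      (i₂ - i₁) * t < (i₂ - j) * a i₁ + (j - i₁) * a i₂) :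
    ∃ lam mu : ℕ, ∀ i ≤ d, lam * (d - j) + mu * t < lam * (d - i) + mu * a i := by
  -- `i₁` maximises the slope `(t - a i) / (j - i)`; the separating slope exceeds that maximum by
  -- `1 / ((d + 1) * (j - i₁))`, little enough since the chord inequalities are between integers.
  obtain ⟨i₁, hi₁, hmax⟩ := Finset.exists_max_image (Finset.range j)
    (fun i => ((t : ℚ) - a i) / (j - i)) ⟨0, Finset.mem_range.mpr hj⟩
  have hi₁j : i₁ < j := Finset.mem_range.mp hi₁
  have hq : (0 : ℚ) < j - i₁ := sub_pos.mpr (by exact_mod_cast hi₁j)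
  have hslope : ∀ i < j, ((j : ℚ) - i₁) * (t - a i) ≤ ((t : ℚ) - a i₁) * (j - i) := by
    intro i hi
    have := hmax i (Finset.mem_range.mpr hi)
    rw [div_le_div_iff₀ (sub_pos.mpr (by exact_mod_cast hi)) hq] at this
    linarith
  have hti₁ : a i₁ ≤ t := by
    by_contra! h
    have h₀ := hslope 0 hj
    rw [Nat.cast_zero, sub_zero] at h₀
    have : (0 : ℚ) ≤ t - a 0 := sub_nonneg.mpr (by exact_mod_cast h0)
    nlinarith [mul_nonneg hq.le this, mul_neg_of_neg_of_pos
      (sub_neg.mpr (by exact_mod_cast h : (t : ℚ) < a i₁)) (by exact_mod_cast hj : (0 : ℚ) < j)]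
  refine ⟨(d + 1) * (t - a i₁) + 1, (d + 1) * (j - i₁), fun i hi => ?_⟩
  qify [hti₁, hi₁j.le, hjd, hi]
  have hN : (0 : ℚ) < d + 1 := by positivity
  rcases lt_trichotomy i j with h | rfl | h
  · have : (i : ℚ) < j := by exact_mod_cast h
    nlinarith [mul_nonneg hN.le (by linarith [hslope i h] :
      (0 : ℚ) ≤ ((t : ℚ) - a i₁) * (j - i) - (j - i₁) * (t - a i))]
  · have : (t : ℚ) < a i := by exact_mod_cast ht
    nlinarith [mul_pos hN (mul_pos hq (sub_pos.mpr this))]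
  · have hc := Nat.succ_le_of_lt (hchord i₁ i hi₁j h hi)
    qify [h.le, (hi₁j.trans h).le, hi₁j.le] at hc
    have : (i : ℚ) ≤ d := by exact_mod_cast hi
    nlinarith [mul_le_mul_of_nonneg_left
      (by linarith : (1 : ℚ) ≤ (j - i₁) * (a i - t) - (t - a i₁) * (i - j)) hN.le]

theorem exists_separating_weight (ha0 : a 0 = 0) (hcc : ChordClosed d a) {s t : ℕ}
    (hst : ¬IsLExponent d a s t) :
    ∃ lam mu : ℕ, ∀ i ≤ d, lam * s + mu * t < lam * (d - i) + mu * a i := by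
  have hsd : s < d := by
    by_contra! h
    exact hst ⟨0, Nat.zero_le d, by omega, by omega⟩
  have hds : d - (d - s) = s := by omega
  have ht : t < a (d - s) := by
    by_contra! h
    exact hst ⟨d - s, by omega, by omega, h⟩
  obtain ⟨lam, mu, h⟩ := exists_separating_weight_of_chord_gt (by omega) (Nat.sub_le d s)
    (by omega) ht fun i₁ i₂ h₁ h₂ hd => lt_of_not_ge fun hc => hst (hds ▸ hcc h₁ h₂ hd hc)
  exact ⟨lam, mu, hds ▸ h⟩

end Exponents

section Lideal

variable {K : Type} [Field K] {m d : ℕ} {a : ℕ → ℕ}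

def initDegree (e : Fin (m + 1) →₀ ℕ) : ℕ := ∑ j : Fin m, e j.castSucc

def splitWeight (m lam mu : ℕ) : Fin (m + 1) → ℕ := fun i => if i = Fin.last m then mu else lam

theorem weight_splitWeight (lam mu : ℕ) (e : Fin (m + 1) →₀ ℕ) :
    Finsupp.weight (splitWeight m lam mu) e = lam * initDegree e + mu * e (Fin.last m) := by
  simp [Finsupp.weight_eq_sum, Fin.sum_univ_castSucc, splitWeight, initDegree, Finset.mul_sum,
    mul_comm]

theorem X_mem_Pid (j : Fin m) : (X j.castSucc : MvPolynomial (Fin (m + 1)) K) ∈ Pid K m :=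
  Ideal.subset_span ⟨j.castSucc, Fin.castSucc_ne_last j, rfl⟩

theorem Pid_pow_mul_le_weightIdeal (lam mu k b : ℕ) :
    Pid K m ^ k * Ideal.span {X (Fin.last m) ^ b} ≤
      weightIdeal (splitWeight m lam mu) (lam * k + mu * b) := by
  have hP : Pid K m ≤ weightIdeal (splitWeight m lam mu) lam := by
    refine Ideal.span_le.mpr ?_
    rintro _ ⟨i, hi, rfl⟩
    exact monomial_mem_weightIdeal (e := Finsupp.single i 1)
      (by simp [Finsupp.weight_single, splitWeight, hi]) 1
  have hX : X (Fin.last m) ^ b ∈ weightIdeal (R := K) (splitWeight m lam mu) (mu * b) := by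
    rw [X_pow_eq_monomial]
    exact monomial_mem_weightIdeal (by simp [Finsupp.weight_single, splitWeight, mul_comm]) 1
  rw [mul_comm lam k]
  exact (Ideal.mul_mono (pow_le_weightIdeal hP k)
    ((Ideal.span_singleton_le_iff_mem _).mpr hX)).trans (weightIdeal_mul_le _ _)

theorem Pid_pow_mul_le_Lideal {i : ℕ} (hi : i ≤ d) :
    Pid K m ^ (d - i) * Ideal.span {X (Fin.last m) ^ a i} ≤ Lideal K m d a := by
  rw [Lideal, Ideal.sum_eq_sup]
  exact Finset.le_sup (f := fun i => Pid K m ^ (d - i) * Ideal.span {X (Fin.last m) ^ a i})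
    (Finset.mem_range.mpr (Nat.lt_succ_of_le hi))

theorem Lideal_le_weightIdeal {lam mu c : ℕ} (h : ∀ i ≤ d, c ≤ lam * (d - i) + mu * a i) :
    Lideal K m d a ≤ weightIdeal (splitWeight m lam mu) c := by
  rw [Lideal, Ideal.sum_eq_sup, Finset.sup_le_iff]
  intro i hi
  exact (Pid_pow_mul_le_weightIdeal lam mu _ _).trans
    (weightIdeal_antitone (h i (Nat.le_of_lt_succ (Finset.mem_range.mp hi))))

theorem monomial_mem_Lideal {e : Fin (m + 1) →₀ ℕ}
    (he : IsLExponent d a (initDegree e) (e (Fin.last m))) (r : K) :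
    monomial e r ∈ Lideal K m d a := by
  obtain ⟨i, hi, hs, ht⟩ := he
  have hprod : ∏ j : Fin m, (X j.castSucc : MvPolynomial (Fin (m + 1)) K) ^ e j.castSucc ∈
      Pid K m ^ initDegree e := by
    rw [initDegree, ← Finset.prod_pow_eq_pow_sum]
    exact Ideal.prod_mem_prod fun j _ => Ideal.pow_mem_pow (X_mem_Pid j) _
  rw [monomial_eq, Finsupp.prod_fintype _ _ (by simp), Fin.prod_univ_castSucc]
  exact Ideal.mul_mem_left _ _ (Pid_pow_mul_le_Lideal hi (Ideal.mul_mem_mul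
    (Ideal.pow_le_pow_right hs hprod) (Ideal.mem_span_singleton.mpr (pow_dvd_pow _ ht))))

theorem mem_Lideal_iff {f : MvPolynomial (Fin (m + 1)) K} :
    f ∈ Lideal K m d a ↔ ∀ e ∈ f.support, IsLExponent d a (initDegree e) (e (Fin.last m)) := by
  refine ⟨fun hf => ?_, fun h => f.as_sum ▸ Ideal.sum_mem _ fun e he =>
    monomial_mem_Lideal (h e he) _⟩
  have hE : IsUpperSet {e : Fin (m + 1) →₀ ℕ | IsLExponent d a (initDegree e) (e (Fin.last m))} :=
    fun e e' hee' ⟨i, hi, hs, ht⟩ =>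
      ⟨i, hi, hs.trans (Finset.sum_le_sum fun j _ => hee' _), ht.trans (hee' _)⟩
  suffices Lideal K m d a ≤ restrictSupportIdeal K _ hE from fun e he => this hf he
  rw [Lideal, Ideal.sum_eq_sup, Finset.sup_le_iff]
  intro i hi g hg e he
  have hs := mem_weightIdeal.mp (Pid_pow_mul_le_weightIdeal 1 0 _ _ hg) e he
  have ht := mem_weightIdeal.mp (Pid_pow_mul_le_weightIdeal 0 1 _ _ hg) e he
  simp only [weight_splitWeight, one_mul, zero_mul, add_zero, zero_add] at hs ht
  exact ⟨i, Nat.le_of_lt_succ (Finset.mem_range.mp hi), hs, ht⟩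

theorem map_rename_Lideal_le {m' : ℕ} (g : Fin (m + 1) → Fin (m' + 1))
    (hg : ∀ i, g i = Fin.last m' ↔ i = Fin.last m) :
    (Lideal K m d a).map (rename g) ≤ Lideal K m' d a := by
  have hP : (Pid K m).map (rename g) ≤ Pid K m' := by
    rw [Pid, Ideal.map_span, Ideal.span_le]
    rintro _ ⟨_, ⟨i, hi, rfl⟩, rfl⟩
    exact Ideal.subset_span ⟨g i, (hg i).not.mpr hi, rename_X g i⟩
  rw [Ideal.map_le_iff_le_comap, Lideal, Ideal.sum_eq_sup, Finset.sup_le_iff]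
  intro i hi
  rw [← Ideal.map_le_iff_le_comap, Ideal.map_mul, Ideal.map_pow, Ideal.map_span,
    Set.image_singleton, map_pow, rename_X, (hg _).mpr rfl]
  exact (Ideal.mul_mono_left (Ideal.pow_right_mono hP _)).trans
    (Pid_pow_mul_le_Lideal (Nat.le_of_lt_succ (Finset.mem_range.mp hi)))

theorem isIC_Lideal_of_chordClosed (ha0 : a 0 = 0) (hcc : ChordClosed d a) :
    IsIC (Lideal K m d a) := by
  refine fun f hf => mem_Lideal_iff.mpr fun e he => by_contra fun hst => ?_
  obtain ⟨lam, mu, hsep⟩ := exists_separating_weight ha0 hcc hst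
  have hL : Lideal K m d a ≤
      weightIdeal (splitWeight m lam mu) (lam * initDegree e + mu * e (Fin.last m) + 1) :=
    Lideal_le_weightIdeal hsep
  have := mem_weightIdeal.mp (mem_weightIdeal_of_mem_intClo hL hf) e he
  rw [weight_splitWeight] at this
  omega

theorem X_pow_mul_X_pow_mem_Lideal_one_iff {s t : ℕ} :
    (X 0 ^ s * X 1 ^ t : MvPolynomial (Fin 2) K) ∈ Lideal K 1 d a ↔ IsLExponent d a s t := by
  classical
  have : (X 0 ^ s * X 1 ^ t : MvPolynomial (Fin 2) K) =
      monomial (Finsupp.single 0 s + Finsupp.single 1 t) 1 := by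
    simp [X_pow_eq_monomial, monomial_mul]
  rw [this, mem_Lideal_iff, support_monomial, if_neg one_ne_zero]
  simp [initDegree]

theorem chordClosed_of_isIC (hIC : IsIC (Lideal K 1 d a)) : ChordClosed d a := by
  intro i₁ j i₂ t h₁ h₂ hd hc
  obtain ⟨rem, hrem⟩ := Nat.exists_eq_add_of_le hc
  have hdeg : (i₂ - i₁) * (d - j) = (i₂ - j) * (d - i₁) + (j - i₁) * (d - i₂) := by
    zify [h₁.le, h₂.le, (h₁.trans h₂).le, hd, h₂.le.trans hd, (h₁.trans h₂).le.trans hd]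
    ring
  have hgen : ∀ i ≤ d, (X 0 ^ (d - i) * X 1 ^ a i : MvPolynomial (Fin 2) K) ∈ Lideal K 1 d a :=
    fun i hi => X_pow_mul_X_pow_mem_Lideal_one_iff.mpr ⟨i, hi, le_rfl, le_rfl⟩
  have hpow : (X 0 ^ (d - j) * X 1 ^ t : MvPolynomial (Fin 2) K) ^ (i₂ - i₁) =
      (X 0 ^ (d - i₁) * X 1 ^ a i₁) ^ (i₂ - j) * (X 0 ^ (d - i₂) * X 1 ^ a i₂) ^ (j - i₁) *
        X 1 ^ rem :=
    calc _ = (X 0 ^ ((i₂ - i₁) * (d - j)) * X 1 ^ ((i₂ - i₁) * t) :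
          MvPolynomial (Fin 2) K) := by ring
      _ = _ := by rw [hdeg, hrem]; ring
  have hmem : (X 0 ^ (d - j) * X 1 ^ t : MvPolynomial (Fin 2) K) ^ (i₂ - i₁) ∈
      Lideal K 1 d a ^ (i₂ - i₁) := by
    rw [hpow, ← Nat.sub_add_sub_cancel h₂.le h₁.le, pow_add]
    exact Ideal.mul_mem_right _ _ (Ideal.mul_mem_mul (Ideal.pow_mem_pow (hgen _ (by omega)) _)
      (Ideal.pow_mem_pow (hgen _ hd) _))
  exact X_pow_mul_X_pow_mem_Lideal_one_iff.mp (hIC _ (mem_intClo_of_pow_mem_pow (by omega) hmem))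

def lastToLast (m m' : ℕ) (i : Fin (m + 1)) : Fin (m' + 1) :=
  if i = Fin.last m then Fin.last m' else 0

theorem lastToLast_eq_last_iff {m' : ℕ} (hm' : 1 ≤ m') (i : Fin (m + 1)) :
    lastToLast m m' i = Fin.last m' ↔ i = Fin.last m := by
  unfold lastToLast
  split_ifs with h
  · simp [h]
  · simp only [h, iff_false, Fin.ext_iff, Fin.val_zero, Fin.val_last]
    omega

theorem isIC_Lideal_one_of_isIC (hm : 1 ≤ m) (h : IsIC (Lideal K m d a)) :
    IsIC (Lideal K 1 d a) := by
  have hid : lastToLast m 1 ∘ lastToLast 1 m = id := by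
    funext i
    fin_cases i <;> simp [lastToLast, Fin.ext_iff]
    omega
  refine IsIC.of_retract (rename (lastToLast 1 m)) (rename (lastToLast m 1))
    (fun f => by rw [rename_rename, hid, rename_id_apply])
    (map_rename_Lideal_le _ (lastToLast_eq_last_iff hm))
    (map_rename_Lideal_le _ (lastToLast_eq_last_iff le_rfl)) h

end Lideal

theorem stmt18_general (K : Type) [Field K] (m : ℕ) (hm : 1 ≤ m) (d : ℕ) (a : ℕ → ℕ)
    (ha0 : a 0 = 0) :
    IsIC (Lideal K m d a) ↔ IsIC (Lideal K 1 d a) :=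
  ⟨isIC_Lideal_one_of_isIC hm, fun h => isIC_Lideal_of_chordClosed ha0 (chordClosed_of_isIC h)⟩

/-- `L(P,a)` is integrally closed in `K[x_1,…,x_n]` (`n = m+1 > 1`)
iff `L((x_1),a)` is integrally closed in `K[x_1,x_2]`. -/
theorem stmt18 (K : Type) [Field K] (m : ℕ) (hm : 1 ≤ m) (d : ℕ) (a : ℕ → ℕ)
    (ha0 : a 0 = 0) (hmono : ∀ i, i < d → a i < a (i + 1)) :
    IsIC (Lideal K m d a) ↔ IsIC (Lideal K 1 d a) :=
  stmt18_general K m hm d a ha0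

end
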